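/- Let k, ℓ, b, n₁, n₂ be positive integers with k, ℓ ≤ b, 2(k+b) < n₁, 2(ℓ+b) < n₂. If R is a proj-intersecting family of k×ℓ rectangles in Z_{n₁} × Z_{n₂} containing ℓ b-blocking pairs with distinct bases in Z_{n₂}, then |R| ≤ ℓ·n₁. -/
import Mathlib


/-- Cyclic distance in `ZMod n`: the smaller of the two distances along the cycle. -/
def cdist {n : ℕ} (u v : ZMod n) : ℕ := min (u - v).val (v - u).val

/-- The cyclic interval of length `k` with left end `i` in `ZMod n`. -/
def cInt {n : ℕ} (i : ZMod n) (k : ℕ) : Finset (ZMod n) :=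
  (Finset.range k).image (fun j : ℕ => (i + (j : ZMod n) : ZMod n))

/-- Distance between two cyclic intervals: minimum cyclic distance between elements. -/
noncomputable def iDist {n : ℕ} (I J : Finset (ZMod n)) : ℕ :=
  sInf {d | ∃ u ∈ I, ∃ v ∈ J, d = cdist u v}

/-- `P` is a `k × ℓ` rectangle in `ZMod n₁ × ZMod n₂`. -/
def IsRect {n₁ n₂ : ℕ} (k ℓ : ℕ) (P : Finset (ZMod n₁) × Finset (ZMod n₂)) : Prop :=
  (∃ i, P.1 = cInt i k) ∧ (∃ j, P.2 = cInt j ℓ)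

/-- A family of rectangles is proj-intersecting if any two members have intersecting
projections in at least one coordinate. -/
def ProjIntersecting {n₁ n₂ : ℕ} (R : Finset (Finset (ZMod n₁) × Finset (ZMod n₂))) : Prop :=
  ∀ P ∈ R, ∀ Q ∈ R, (P.1 ∩ Q.1).Nonempty ∨ (P.2 ∩ Q.2).Nonempty

lemma cdist_comm {n : ℕ} (u v : ZMod n) : cdist u v = cdist v u := min_comm _ _

lemma cdist_add_right {n : ℕ} (a b c : ZMod n) : cdist (a + c) (b + c) = cdist a b := by
  simp [cdist, add_sub_add_right_eq_sub]

lemma cdist_cast_lt {n k u v : ℕ} (hu : u < k) (hv : v < k) :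
    cdist ((u : ZMod n)) ((v : ZMod n)) < k := by
  have aux : ∀ u v : ℕ, v ≤ u → u < k → cdist ((u : ZMod n)) ((v : ZMod n)) < k := by
    intro u v h hu
    have e : ((u : ZMod n)) - v = ((u - v : ℕ) : ZMod n) := by
      rw [Nat.cast_sub h]
    calc cdist ((u : ZMod n)) ((v : ZMod n)) ≤ ((u : ZMod n) - v).val := min_le_left _ _
      _ = (u - v) % n := by rw [e, ZMod.val_natCast]
      _ ≤ u - v := Nat.mod_le _ _
      _ < k := by omega
  rcases le_total v u with h | h
  · exact aux u v h hu
  · rw [cdist_comm]; exact aux v u h hv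

lemma mem_cInt {n k : ℕ} {x s : ZMod n} :
    x ∈ cInt s k ↔ ∃ u, u < k ∧ x = s + (u : ZMod n) := by
  simp [cInt, Finset.mem_image, Finset.mem_range, eq_comm]

lemma cdist_lt_of_mem {n k : ℕ} {s x y : ZMod n} (hx : x ∈ cInt s k) (hy : y ∈ cInt s k) :
    cdist x y < k := by
  obtain ⟨u, hu, rfl⟩ := mem_cInt.mp hx
  obtain ⟨v, hv, rfl⟩ := mem_cInt.mp hy
  rw [add_comm s, add_comm s, cdist_add_right]
  exact cdist_cast_lt hu hv

lemma cdist_lt_of_inter {n k : ℕ} {i i' : ZMod n} (h : (cInt i k ∩ cInt i' k).Nonempty) :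
    cdist i i' < k := by
  obtain ⟨x, hx⟩ := h
  rw [Finset.mem_inter] at hx
  obtain ⟨u, hu, hxu⟩ := mem_cInt.mp hx.1
  obtain ⟨v, hv, hxv⟩ := mem_cInt.mp hx.2
  have : cdist (i + (v : ZMod n)) (i' + (v : ZMod n)) < k := by
    rw [← hxv, hxu, add_comm i ((v : ZMod n)), add_comm i ((u : ZMod n)), cdist_add_right]
    exact cdist_cast_lt hv hu
  rwa [cdist_add_right] at this

lemma phi_range {n ℓ : ℕ} [NeZero n] (hn : 2 * ℓ < n) {x j₁ : ZMod n}
    (h : cdist x j₁ < ℓ) :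
    1 ≤ (x - j₁ + (ℓ : ZMod n)).val ∧ (x - j₁ + (ℓ : ZMod n)).val ≤ 2 * ℓ - 1 := by
  rcases min_lt_iff.mp h with ha | hc
  · set a := (x - j₁).val with hadef
    have e1 : x - j₁ = ((a : ℕ) : ZMod n) := (ZMod.natCast_rightInverse (x - j₁)).symm
    have e2 : x - j₁ + (ℓ : ZMod n) = ((a + ℓ : ℕ) : ZMod n) := by rw [e1]; push_cast; ring
    rw [e2, ZMod.val_natCast, Nat.mod_eq_of_lt (by omega)]
    omega
  · set c := (j₁ - x).val with hcdef
    have e1 : j₁ - x = ((c : ℕ) : ZMod n) := (ZMod.natCast_rightInverse (j₁ - x)).symm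
    have e2 : x - j₁ + (ℓ : ZMod n) = ((ℓ - c : ℕ) : ZMod n) := by
      rw [Nat.cast_sub (le_of_lt hc)]
      rw [show x - j₁ = -(j₁ - x) by ring, e1]
      ring
    rw [e2, ZMod.val_natCast, Nat.mod_eq_of_lt (by omega)]
    omega

lemma phi_cdist {n ℓ : ℕ} [NeZero n] (hn : 4 * ℓ < n) {x y j₁ : ZMod n}
    (ha : (x - j₁ + (ℓ : ZMod n)).val ≤ 2 * ℓ - 1)
    (hb : (y - j₁ + (ℓ : ZMod n)).val ≤ 2 * ℓ - 1)
    (h : cdist x y < ℓ) :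
    (x - j₁ + (ℓ : ZMod n)).val - (y - j₁ + (ℓ : ZMod n)).val < ℓ ∧
    (y - j₁ + (ℓ : ZMod n)).val - (x - j₁ + (ℓ : ZMod n)).val < ℓ := by
  have aux : ∀ x y : ZMod n, (x - j₁ + (ℓ : ZMod n)).val ≤ 2 * ℓ - 1 →
      (y - j₁ + (ℓ : ZMod n)).val ≤ 2 * ℓ - 1 →
      (y - j₁ + (ℓ : ZMod n)).val ≤ (x - j₁ + (ℓ : ZMod n)).val →
      cdist x y < ℓ →
      (x - j₁ + (ℓ : ZMod n)).val - (y - j₁ + (ℓ : ZMod n)).val < ℓ := by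
    intro x y ha hb hba h
    set a := (x - j₁ + (ℓ : ZMod n)).val with hadef
    set b := (y - j₁ + (ℓ : ZMod n)).val with hbdef
    have ea : x - j₁ + (ℓ : ZMod n) = ((a : ℕ) : ZMod n) := (ZMod.natCast_rightInverse _).symm
    have eb : y - j₁ + (ℓ : ZMod n) = ((b : ℕ) : ZMod n) := (ZMod.natCast_rightInverse _).symm
    have exy : x - y = ((a - b : ℕ) : ZMod n) := by
      rw [Nat.cast_sub hba]
      rw [show x - y = (x - j₁ + (ℓ : ZMod n)) - (y - j₁ + (ℓ : ZMod n)) by ring, ea, eb]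
    have hvxy : (x - y).val = a - b := by
      rw [exy, ZMod.val_natCast, Nat.mod_eq_of_lt (by omega)]
    rcases min_lt_iff.mp h with h1 | h2
    · omega
    · -- (y - x).val < ℓ
      by_cases hab : a = b
      · omega
      · have hd : 0 < a - b := by omega
        have eyx : y - x = ((n - (a - b) : ℕ) : ZMod n) := by
          rw [Nat.cast_sub (by omega : a - b ≤ n)]
          rw [show y - x = -(x - y) by ring, exy]
          simp
        have : (y - x).val = n - (a - b) := by
          rw [eyx, ZMod.val_natCast, Nat.mod_eq_of_lt (by omega)]
        omega
  rcases le_total ((y - j₁ + (ℓ : ZMod n)).val) ((x - j₁ + (ℓ : ZMod n)).val) with hle | hle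
  · exact ⟨aux x y ha hb hle h, by omega⟩
  · exact ⟨by omega, aux y x hb ha hle (by rwa [cdist_comm])⟩

open Classical in
noncomputable def leftEnd {n : ℕ} (ℓ : ℕ) (A : Finset (ZMod n)) : ZMod n :=
  if h : ∃ j, A = cInt j ℓ then h.choose else 0

lemma leftEnd_spec {n ℓ : ℕ} {A : Finset (ZMod n)} (h : ∃ j, A = cInt j ℓ) :
    A = cInt (leftEnd ℓ A) ℓ := by
  classical
  rw [leftEnd, dif_pos h]
  exact h.choose_spec

/-- Auxiliary: the "unrolled coordinate" of `x` relative to `j₁`, shifted by `ℓ`. -/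
def phiVal {n : ℕ} (ℓ : ℕ) (j₁ : ZMod n) (x : ZMod n) : ℕ := (x - j₁ + (ℓ : ZMod n)).val

lemma phiVal_inj {n ℓ : ℕ} [NeZero n] {j₁ x y : ZMod n}
    (h : phiVal ℓ j₁ x = phiVal ℓ j₁ y) : x = y := by
  have h2 := ZMod.val_injective n h
  exact sub_left_inj.mp (add_right_cancel h2)

lemma phiVal_range {n ℓ : ℕ} [NeZero n] (hn : 2 * ℓ < n) {x j₁ : ZMod n}
    (h : cdist x j₁ < ℓ) : 1 ≤ phiVal ℓ j₁ x ∧ phiVal ℓ j₁ x ≤ 2 * ℓ - 1 :=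
  phi_range hn h

lemma phiVal_cdist {n ℓ : ℕ} [NeZero n] (hn : 4 * ℓ < n) {x y j₁ : ZMod n}
    (ha : phiVal ℓ j₁ x ≤ 2 * ℓ - 1) (hb : phiVal ℓ j₁ y ≤ 2 * ℓ - 1)
    (h : cdist x y < ℓ) :
    phiVal ℓ j₁ x - phiVal ℓ j₁ y < ℓ ∧ phiVal ℓ j₁ y - phiVal ℓ j₁ x < ℓ :=
  phi_cdist hn ha hb h

theorem stmt6 (k ℓ b n₁ n₂ : ℕ) (hk : 0 < k) (hl : 0 < ℓ) (hkb : k ≤ b) (hlb : ℓ ≤ b)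
    (h1 : 2 * (k + b) < n₁) (h2 : 2 * (ℓ + b) < n₂)
    (R : Finset (Finset (ZMod n₁) × Finset (ZMod n₂)))
    (hrect : ∀ P ∈ R, IsRect k ℓ P) (hproj : ProjIntersecting R)
    (Bs : Finset (Finset (ZMod n₂))) (hBs : Bs.card = ℓ)
    (hbase : ∀ J ∈ Bs, ∃ P ∈ R, ∃ Q ∈ R, P.2 = J ∧ Q.2 = J ∧ b + 1 ≤ iDist P.1 Q.1) :
    R.card ≤ ℓ * n₁ := by
  haveI : NeZero n₁ := ⟨by omega⟩
  haveI : NeZero n₂ := ⟨by omega⟩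
  -- Step 0: every rectangle's base intersects every blocking base.
  have step0 : ∀ S ∈ R, ∀ J ∈ Bs, (S.2 ∩ J).Nonempty := by
    intro S hS J hJ
    obtain ⟨P, hP, Q, hQ, hPJ, hQJ, hd⟩ := hbase J hJ
    by_contra hcon
    have hSP : (S.1 ∩ P.1).Nonempty := by
      rcases hproj S hS P hP with h | h
      · exact h
      · rw [hPJ] at h; exact absurd h hcon
    have hSQ : (S.1 ∩ Q.1).Nonempty := by
      rcases hproj S hS Q hQ with h | h
      · exact h
      · rw [hQJ] at h; exact absurd h hcon
    obtain ⟨s, hs⟩ := (hrect S hS).1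
    obtain ⟨x, hx⟩ := hSP
    obtain ⟨y, hy⟩ := hSQ
    rw [Finset.mem_inter] at hx hy
    have hxy : cdist x y < k := cdist_lt_of_mem (hs ▸ hx.1) (hs ▸ hy.1)
    have hle : iDist P.1 Q.1 ≤ cdist x y := Nat.sInf_le ⟨x, hx.2, y, hy.2, rfl⟩
    omega
  have hInt2 : ∀ S ∈ R, S.2 = cInt (leftEnd ℓ S.2) ℓ := fun S hS => leftEnd_spec (hrect S hS).2
  have hbaseR : ∀ J ∈ Bs, ∃ S ∈ R, S.2 = J := by
    intro J hJ; obtain ⟨P, hP, Q, hQ, hPJ, _⟩ := hbase J hJ; exact ⟨P, hP, hPJ⟩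
  have hBsInt : ∀ J ∈ Bs, J = cInt (leftEnd ℓ J) ℓ := by
    intro J hJ; obtain ⟨S, hS, hSJ⟩ := hbaseR J hJ
    rw [← hSJ]; exact hInt2 S hS
  have key : ∀ S ∈ R, ∀ J ∈ Bs, cdist (leftEnd ℓ S.2) (leftEnd ℓ J) < ℓ := by
    intro S hS J hJ
    apply cdist_lt_of_inter
    rw [← hInt2 S hS, ← hBsInt J hJ]
    exact step0 S hS J hJ
  obtain ⟨J₁, hJ₁⟩ := Finset.card_pos.mp (show 0 < Bs.card by omega)
  set j₁ := leftEnd ℓ J₁ with hj₁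
  have hrange : ∀ S ∈ R, 1 ≤ phiVal ℓ j₁ (leftEnd ℓ S.2) ∧
      phiVal ℓ j₁ (leftEnd ℓ S.2) ≤ 2 * ℓ - 1 := by
    intro S hS
    exact phiVal_range (by omega) (key S hS J₁ hJ₁)
  have hrangeB : ∀ J ∈ Bs, 1 ≤ phiVal ℓ j₁ (leftEnd ℓ J) ∧
      phiVal ℓ j₁ (leftEnd ℓ J) ≤ 2 * ℓ - 1 := by
    intro J hJ; obtain ⟨S, hS, hSJ⟩ := hbaseR J hJ
    rw [← hSJ]; exact hrange S hS
  have keyB : ∀ J ∈ Bs, ∀ J' ∈ Bs, cdist (leftEnd ℓ J) (leftEnd ℓ J') < ℓ := by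
    intro J hJ J' hJ'
    obtain ⟨S, hS, hSJ⟩ := hbaseR J hJ
    have := key S hS J' hJ'
    rwa [hSJ] at this
  set g : Finset (ZMod n₂) → ℕ := fun A => phiVal ℓ j₁ (leftEnd ℓ A) with hg
  set B' := Bs.image g with hB'
  have hB'card : B'.card = ℓ := by
    rw [hB', Finset.card_image_of_injOn, hBs]
    intro J hJ J' hJ' hgg
    have h1 : leftEnd ℓ J = leftEnd ℓ J' := phiVal_inj hgg
    rw [hBsInt J hJ, hBsInt J' hJ', h1]
  have hB'ne : B'.Nonempty := ⟨g J₁, Finset.mem_image_of_mem g hJ₁⟩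
  set m := B'.min' hB'ne with hm
  set M := B'.max' hB'ne with hM
  obtain ⟨Jm, hJm, hJmg⟩ := Finset.mem_image.mp (B'.min'_mem hB'ne)
  obtain ⟨JM, hJM, hJMg⟩ := Finset.mem_image.mp (B'.max'_mem hB'ne)
  have hmM : m ≤ M := Finset.min'_le _ _ (B'.max'_mem hB'ne)
  have hcard_le : ℓ ≤ M - m + 1 := by
    have hsub : B' ⊆ Finset.Icc m M := fun a ha =>
      Finset.mem_Icc.mpr ⟨Finset.min'_le _ _ ha, Finset.le_max' _ _ ha⟩
    calc ℓ = B'.card := hB'card.symm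
      _ ≤ (Finset.Icc m M).card := Finset.card_le_card hsub
      _ = M + 1 - m := Nat.card_Icc m M
      _ ≤ M - m + 1 := by omega
  have hMm : M - m < ℓ := by
    have hc := keyB JM hJM Jm hJm
    have hps := phiVal_cdist (n := n₂) (by omega) (hrangeB JM hJM).2 (hrangeB Jm hJm).2 hc
    have e1 : g JM = M := hJMg
    have e2 : g Jm = m := hJmg
    rw [hg] at e1 e2
    simp only [] at e1 e2
    omega
  have final : ∀ S ∈ R, g S.2 ∈ Finset.Icc m M := by
    intro S hS
    have hA := phiVal_cdist (n := n₂) (by omega) (hrange S hS).2 (hrangeB JM hJM).2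
      (key S hS JM hJM)
    have hB := phiVal_cdist (n := n₂) (by omega) (hrange S hS).2 (hrangeB Jm hJm).2
      (key S hS Jm hJm)
    have e1 : g JM = M := hJMg
    have e2 : g Jm = m := hJmg
    rw [hg] at e1 e2
    simp only [] at e1 e2
    have egS : g S.2 = phiVal ℓ j₁ (leftEnd ℓ S.2) := rfl
    rw [Finset.mem_Icc, egS]
    omega
  have hinj : Set.InjOn (fun S : Finset (ZMod n₁) × Finset (ZMod n₂) =>
      (g S.2, leftEnd k S.1)) R := by
    intro S hS S' hS' heq
    have h2 : g S.2 = g S'.2 := congrArg Prod.fst heq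
    have h1 : leftEnd k S.1 = leftEnd k S'.1 := congrArg Prod.snd heq
    have hS2 : S.2 = S'.2 := by
      have := phiVal_inj (n := n₂) (ℓ := ℓ) (j₁ := j₁) h2
      rw [hInt2 S hS, hInt2 S' hS', this]
    have hS1 : S.1 = S'.1 := by
      rw [leftEnd_spec (hrect S hS).1, leftEnd_spec (hrect S' hS').1, h1]
    exact Prod.ext hS1 hS2
  calc R.card ≤ (Finset.Icc m M ×ˢ (Finset.univ : Finset (ZMod n₁))).card := by
        apply Finset.card_le_card_of_injOn _ _ hinj
        intro S hS
        exact Finset.mem_product.mpr ⟨final S hS, Finset.mem_univ _⟩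
    _ = (M + 1 - m) * n₁ := by
        rw [Finset.card_product, Nat.card_Icc, Finset.card_univ, ZMod.card]
    _ ≤ ℓ * n₁ := Nat.mul_le_mul_right _ (by omega)
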